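/- Fix an even integer κ ≥ 4 and an odd integer n ≥ 1. Let E > 0 and X₀, …, X_{n+1} satisfy: T_κ(X_q) = T_κ(X_{n−q}) for q = 0, 1, …, (n−1)/2; X_{1+q}·X_{n−q} = E for q = −1, 0, …, (n−1)/2; X_q ∈ (−1,1)∖{0} and U_{κ−1}(X_q) ≠ 0 for q = 0, 1, …, (n−1)/2; and X_{n+1} ∈ {cos(lπ/κ) : 0 ≤ l ≤ κ}∖{0}. Suppose moreover there are disjoint sets I₁, I₂ with I₁ ∪ I₂ = {0, 1, …, (n−1)/2} such that X_q·X_{n−q} > 0 and U_{κ−1}(X_q)·U_{κ−1}(X_{n−q}) < 0 for q ∈ I₁, and X_q·X_{n−q} < 0 and U_{κ−1}(X_q)·U_{κ−1}(X_{n−q}) > 0 for q ∈ I₂. Then the coefficients ω_q = 2·(−1)^{(n−1)/2−q} · (∏_{p=q}^{(n−1)/2} X_p)/(∏_{p=(n+1)/2}^{n−q} X_p) · (∏_{p=(n+1)/2}^{n−q} (1−X_p²)·U_{κ−1}(X_p))/(∏_{p=q}^{(n−1)/2} (1−X_p²)·U_{κ−1}(X_p)) are all strictly negative, and consequently E ∈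 𝚯_{(n+1)/2,κ} (dimension 2). -/

import Mathlib

/-!
Put `F(x) = (1 - x²) U_{κ-1}(x)`. On `(-1, 1)` one has `U_{jκ-1} = U_{j-1}(T_κ) · U_{κ-1}`, so the
pairing `X_q X_{n+1-q} = E` together with `T_κ(X_q) = T_κ(X_{n-q})` makes `g_{jκ}^E(X_q)` a
combination of `U_{j-1}(T_κ X_q)` and `U_{j-1}(T_κ X_{q-1})` alone; at `q = 0` the second term
vanishes because `X_{n+1}` is a node `cos(lπ/κ)`. The `ω_q` are exactly the coefficients that make
`∑ ω_q g_{jκ}^E(X_q)` telescope to `g_{jκ}^E(X_{(n+1)/2})`.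

For the signs, `ω_q = -2 ∏_{p=q}^{(n-1)/2} (-r_p)` with `r_p = X_p F(X_{n-p}) / (X_{n-p} F(X_p))`,
and the hypotheses on `I₁, I₂` make every `r_p` negative once `|X_{n-p}| < 1`. That holds because
`T_κ² + (1 - x²) U_{κ-1}² = 1` gives `|T_κ(X_p)| < 1`, while `|T_κ(y)| ≥ 1` whenever `|y| ≥ 1`.
-/

open Real

/-- Chebyshev polynomial of the first kind, as a real function. -/
noncomputable def chebT (n : ℕ) (x : ℝ) : ℝ := (Polynomial.Chebyshev.T ℝ n).eval x

/-- Chebyshev polynomial of the second kind, as a real function. -/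
noncomputable def chebU (n : ℕ) (x : ℝ) : ℝ := (Polynomial.Chebyshev.U ℝ n).eval x

/-- The function `g_{jκ}^E(x) = (E/x)(1-x²)U_{jκ-1}(x) + x(1-(E/x)²)U_{jκ-1}(E/x)`. -/
noncomputable def g (j κ : ℕ) (E x : ℝ) : ℝ :=
  (E / x) * (1 - x ^ 2) * chebU (j * κ - 1) x + x * (1 - (E / x) ^ 2) * chebU (j * κ - 1) (E / x)

/-- `E ∈ 𝚯_{m,κ}` (dimension 2). -/
def Theta2 (m κ : ℕ) (E : ℝ) : Prop :=
  ∃ x : ℕ → ℝ, ∃ ω : ℕ → ℝ,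
    (∀ q ≤ m, x q ≠ 0 ∧ |x q| ≤ 1 ∧ |E / x q| ≤ 1) ∧
    (∀ q < m, ω q ≤ 0) ∧
    (∀ j : ℕ, 1 ≤ j → g j κ E (x m) = ∑ q ∈ Finset.range m, ω q * g j κ E (x q))

/-- The coefficients `ω_q` of Proposition `prop1_intro` (odd case). -/
noncomputable def omegaOdd (κ n : ℕ) (X : ℕ → ℝ) (q : ℕ) : ℝ :=
  2 * (-1 : ℝ) ^ ((n - 1) / 2 - q)
    * ((∏ p ∈ Finset.Icc q ((n - 1) / 2), X p)
        / (∏ p ∈ Finset.Icc ((n + 1) / 2) (n - q), X p))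
    * ((∏ p ∈ Finset.Icc ((n + 1) / 2) (n - q), (1 - X p ^ 2) * chebU (κ - 1) (X p))
        / (∏ p ∈ Finset.Icc q ((n - 1) / 2), (1 - X p ^ 2) * chebU (κ - 1) (X p)))
lemma chebT_cos (n : ℕ) (θ : ℝ) : chebT n (cos θ) = cos (n * θ) := by
  simp [chebT, Polynomial.Chebyshev.T_real_cos]

lemma chebU_sub_one_cos_mul_sin {m : ℕ} (hm : 1 ≤ m) (θ : ℝ) :
    chebU (m - 1) (cos θ) * sin θ = sin (m * θ) := by
  simp [chebU, Polynomial.Chebyshev.U_real_cos, Nat.cast_sub hm]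

lemma chebU_mul_sub_one {j κ : ℕ} (hj : 1 ≤ j) (hκ : 1 ≤ κ) {x : ℝ} (hx : |x| < 1) :
    chebU (j * κ - 1) x = chebU (j - 1) (chebT κ x) * chebU (κ - 1) x := by
  obtain ⟨hx₁, hx₂⟩ := abs_lt.mp hx
  have hcos : cos (arccos x) = x := cos_arccos hx₁.le hx₂.le
  have hsin : sin (arccos x) ≠ 0 := (sin_pos_of_pos_of_lt_pi (arccos_pos.mpr hx₂)
    (arccos_lt_pi.mpr hx₁)).ne'
  rw [← hcos, chebT_cos]
  refine mul_right_cancel₀ hsin ?_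
  rw [mul_assoc, chebU_sub_one_cos_mul_sin hκ, chebU_sub_one_cos_mul_sin hj,
    chebU_sub_one_cos_mul_sin (Nat.one_le_iff_ne_zero.mpr (by positivity)), Nat.cast_mul, mul_assoc]

lemma one_sub_sq_mul_chebU_cos_eq_zero {j κ : ℕ} (hj : 1 ≤ j) (hκ : 1 ≤ κ) (l : ℕ) :
    (1 - cos (l * π / κ) ^ 2) * chebU (j * κ - 1) (cos (l * π / κ)) = 0 := by
  have hsin : sin ((j * κ : ℕ) * (l * π / κ)) = 0 := by
    rw [← sin_nat_mul_pi (j * l)]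
    congr 1
    push_cast
    field_simp
  rw [← sin_sq, sq, mul_assoc, mul_comm, mul_assoc,
    chebU_sub_one_cos_mul_sin (Nat.one_le_iff_ne_zero.mpr (by positivity)), hsin, mul_zero]

lemma chebT_sq_add_one_sub_sq_mul_chebU_sq {κ : ℕ} (hκ : 1 ≤ κ) {x : ℝ} (hx : |x| ≤ 1) :
    chebT κ x ^ 2 + (1 - x ^ 2) * chebU (κ - 1) x ^ 2 = 1 := by
  obtain ⟨hx₁, hx₂⟩ := abs_le.mp hx
  rw [← cos_arccos hx₁ hx₂, chebT_cos, ← sin_sq, ← mul_pow, mul_comm (sin _),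
    chebU_sub_one_cos_mul_sin hκ, cos_sq_add_sin_sq]

lemma abs_lt_one_of_chebT_eq {κ : ℕ} (hκ : 1 ≤ κ) {x y : ℝ} (hx : |x| < 1)
    (hU : chebU (κ - 1) x ≠ 0) (hxy : chebT κ x = chebT κ y) : |y| < 1 := by
  by_contra! hy
  have hTy : 1 ≤ chebT κ y ^ 2 :=
    (one_le_sq_iff_one_le_abs _).mpr (Polynomial.Chebyshev.one_le_abs_eval_T_real κ hy)
  have hx₂ : 0 < 1 - x ^ 2 := sub_pos.mpr ((sq_lt_one_iff_abs_lt_one x).mpr hx)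
  have hpos : 0 < (1 - x ^ 2) * chebU (κ - 1) x ^ 2 := by positivity
  linarith [hxy ▸ chebT_sq_add_one_sub_sq_mul_chebU_sq hκ hx.le]

noncomputable def chebF (κ : ℕ) (x : ℝ) : ℝ := (1 - x ^ 2) * chebU (κ - 1) x

def IsAdmissible (κ : ℕ) (x : ℝ) : Prop := x ≠ 0 ∧ |x| < 1 ∧ chebU (κ - 1) x ≠ 0

namespace IsAdmissible

variable {κ : ℕ} {x y : ℝ}

lemma one_sub_sq_pos (hx : IsAdmissible κ x) : 0 < 1 - x ^ 2 :=
  sub_pos.mpr ((sq_lt_one_iff_abs_lt_one x).mpr hx.2.1)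

lemma chebF_ne_zero (hx : IsAdmissible κ x) : chebF κ x ≠ 0 :=
  mul_ne_zero hx.one_sub_sq_pos.ne' hx.2.2

lemma of_chebT_eq (hκ : 1 ≤ κ) (hx : IsAdmissible κ x) (hxy : chebT κ x = chebT κ y)
    (hsign : x * y * (chebU (κ - 1) x * chebU (κ - 1) y) < 0) : IsAdmissible κ y :=
  ⟨fun hy ↦ hsign.ne (by simp [hy]), abs_lt_one_of_chebT_eq hκ hx.2.1 hx.2.2 hxy,
    fun hU ↦ hsign.ne (by simp [hU])⟩

end IsAdmissible

lemma g_eq_of_mul_eq {j κ : ℕ} (hj : 1 ≤ j) (hκ : 1 ≤ κ) {E x y : ℝ} (hx₀ : x ≠ 0)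
    (hxy : x * y = E) (hx : |x| < 1) (hy : |y| < 1) :
    g j κ E x = y * chebF κ x * chebU (j - 1) (chebT κ x)
      + x * chebF κ y * chebU (j - 1) (chebT κ y) := by
  rw [g, ← hxy, mul_div_cancel_left₀ _ hx₀, chebU_mul_sub_one hj hκ hx,
    chebU_mul_sub_one hj hκ hy, chebF, chebF]
  ring

lemma g_eq_of_mul_cos_eq {j κ : ℕ} (hj : 1 ≤ j) (hκ : 1 ≤ κ) {E x : ℝ} {l : ℕ} (hx₀ : x ≠ 0)
    (hxy : x * cos (l * π / κ) = E) (hx : |x| < 1) :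
    g j κ E x = cos (l * π / κ) * chebF κ x * chebU (j - 1) (chebT κ x) := by
  rw [g, ← hxy, mul_div_cancel_left₀ _ hx₀, chebU_mul_sub_one hj hκ hx, mul_assoc x,
    one_sub_sq_mul_chebU_cos_eq_zero hj hκ, chebF]
  ring

lemma sum_range_mul_telescope (a b s ω G : ℕ → ℝ) (m : ℕ) (hG₀ : G 0 = a 0 * s 0)
    (hG : ∀ q < m, G (q + 1) = a (q + 1) * s (q + 1) + b (q + 1) * s q)
    (hω : ∀ q < m, ω q * a q + ω (q + 1) * b (q + 1) = 0) :
    ∑ q ∈ Finset.range (m + 1), ω q * G q = ω m * a m * s m := by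
  induction m with
  | zero => simp [hG₀, mul_assoc]
  | succ m ih =>
    rw [Finset.sum_range_succ, ih (fun q hq ↦ hG q (by omega)) (fun q hq ↦ hω q (by omega)),
      hG m (by omega)]
    linear_combination s m * hω m (by omega)

noncomputable def omegaRatio (κ n : ℕ) (X : ℕ → ℝ) (p : ℕ) : ℝ :=
  X p * chebF κ (X (n - p)) / (X (n - p) * chebF κ (X p))

section omegaOdd

variable {κ n k : ℕ} {X : ℕ → ℝ}

lemma omegaOdd_eq_neg_two_mul_prod (hn : n = 2 * k + 1) {q : ℕ} (hq : q ≤ k) :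
    omegaOdd κ n X q = -2 * ∏ p ∈ Finset.Icc q k, -omegaRatio κ n X p := by
  have hreflect (f : ℕ → ℝ) :
      ∏ p ∈ Finset.Icc (k + 1) (n - q), f p = ∏ p ∈ Finset.Icc q k, f (n - p) := by
    rw [← Finset.Ico_add_one_right_eq_Icc, ← Finset.Ico_add_one_right_eq_Icc,
      Finset.prod_Ico_reflect f q (by omega)]
    congr 2 <;> omega
  have hcard : (Finset.Icc q k).card = k - q + 1 := by rw [Nat.card_Icc]; omega
  rw [omegaOdd, show (n - 1) / 2 = k by omega, show (n + 1) / 2 = k + 1 by omega, hreflect,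
    hreflect, Finset.prod_neg, hcard, pow_succ]
  simp only [omegaRatio, chebF, Finset.prod_div_distrib, Finset.prod_mul_distrib]
  ring

lemma omegaOdd_self (hn : n = 2 * k + 1) : omegaOdd κ n X k = 2 * omegaRatio κ n X k := by
  rw [omegaOdd_eq_neg_two_mul_prod hn le_rfl, Finset.Icc_self, Finset.prod_singleton]
  ring

lemma omegaOdd_eq_neg_mul_succ (hn : n = 2 * k + 1) {q : ℕ} (hq : q < k) :
    omegaOdd κ n X q = -omegaRatio κ n X q * omegaOdd κ n X (q + 1) := by
  have hinsert : Finset.Icc q k = insert q (Finset.Icc (q + 1) k) :=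
    (Finset.insert_Icc_add_one_left_eq_Icc hq.le).symm
  rw [omegaOdd_eq_neg_two_mul_prod hn hq.le, omegaOdd_eq_neg_two_mul_prod hn hq, hinsert,
    Finset.prod_insert (by simp)]
  ring

lemma omegaOdd_neg (hn : n = 2 * k + 1) (hr : ∀ p ≤ k, omegaRatio κ n X p < 0) {q : ℕ}
    (hq : q ≤ k) : omegaOdd κ n X q < 0 := by
  have hprod : 0 < ∏ p ∈ Finset.Icc q k, -omegaRatio κ n X p :=
    Finset.prod_pos fun p hp ↦ neg_pos.mpr (hr p (Finset.mem_Icc.mp hp).2)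
  rw [omegaOdd_eq_neg_two_mul_prod hn hq]
  linarith

lemma omegaRatio_neg {p : ℕ} (hp : 0 < 1 - X p ^ 2) (hnp : 0 < 1 - X (n - p) ^ 2)
    (hsign : X p * X (n - p) * (chebU (κ - 1) (X p) * chebU (κ - 1) (X (n - p))) < 0) :
    omegaRatio κ n X p < 0 := by
  refine div_neg_iff.mpr (mul_neg_iff.mp ?_)
  calc X p * chebF κ (X (n - p)) * (X (n - p) * chebF κ (X p))
      = (1 - X p ^ 2) * (1 - X (n - p) ^ 2)
        * (X p * X (n - p) * (chebU (κ - 1) (X p) * chebU (κ - 1) (X (n - p)))) := by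
        simp only [chebF]; ring
    _ < 0 := mul_neg_of_pos_of_neg (mul_pos hp hnp) hsign

lemma g_eq_sum_omegaOdd (hκ : 1 ≤ κ) (hn : n = 2 * k + 1) {j l : ℕ} (hj : 1 ≤ j) {E : ℝ}
    (hX : ∀ p ≤ n, IsAdmissible κ (X p)) (hP : ∀ q ≤ k + 1, X q * X (n + 1 - q) = E)
    (hT : ∀ q ≤ k, chebT κ (X q) = chebT κ (X (n - q)))
    (hlast : X (n + 1) = cos (l * π / κ)) :
    g j κ E (X (k + 1)) = ∑ q ∈ Finset.range (k + 1), omegaOdd κ n X q * g j κ E (X q) := by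
  set s : ℕ → ℝ := fun q ↦ chebU (j - 1) (chebT κ (X q))
  set a : ℕ → ℝ := fun q ↦ X (n + 1 - q) * chebF κ (X q)
  set b : ℕ → ℝ := fun q ↦ X q * chebF κ (X (n + 1 - q))
  have hg₀ : g j κ E (X 0) = a 0 * s 0 := by
    have h := hP 0 (by omega)
    rw [Nat.sub_zero, hlast] at h
    rw [g_eq_of_mul_cos_eq hj hκ (hX 0 (by omega)).1 h (hX 0 (by omega)).2.1]
    simp only [a, s, Nat.sub_zero, hlast]
  have hg : ∀ q ≤ k, g j κ E (X (q + 1)) = a (q + 1) * s (q + 1) + b (q + 1) * s q := by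
    intro q hq
    have hpartner : n + 1 - (q + 1) = n - q := by omega
    have h := hP (q + 1) (by omega)
    rw [hpartner] at h
    rw [g_eq_of_mul_eq hj hκ (hX _ (by omega)).1 h (hX _ (by omega)).2.1 (hX _ (by omega)).2.1]
    simp only [a, b, s, hpartner, hT q hq]
  have hrec : ∀ q < k, omegaOdd κ n X q * a q + omegaOdd κ n X (q + 1) * b (q + 1) = 0 := by
    intro q hq
    have hpartner : n + 1 - (q + 1) = n - q := by omega
    have h₁ := hP q (by omega)
    have h₂ := hP (q + 1) (by omega)
    rw [hpartner] at h₂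
    have hXq := (hX q (by omega)).1
    have hXnq := (hX (n - q) (by omega)).1
    have hFq := (hX q (by omega)).chebF_ne_zero
    rw [omegaOdd_eq_neg_mul_succ hn hq]
    simp only [a, b, omegaRatio, hpartner]
    field_simp
    linear_combination chebF κ (X (n - q)) * omegaOdd κ n X (q + 1) * (h₂ - h₁)
  have htop : g j κ E (X (k + 1)) = omegaOdd κ n X k * a k * s k := by
    have hmid : n + 1 - (k + 1) = k + 1 := by omega
    have hpartner : n + 1 - k = k + 2 := by omega
    have h₁ := hP k (by omega)
    have h₂ := hP (k + 1) le_rfl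
    rw [hpartner] at h₁
    rw [hmid] at h₂
    have hXk := (hX k (by omega)).1
    have hXk' := (hX (k + 1) (by omega)).1
    have hFk := (hX k (by omega)).chebF_ne_zero
    have hs : s (k + 1) = s k := by simp only [s, hT k le_rfl, show n - k = k + 1 by omega]
    rw [hg k le_rfl, omegaOdd_self hn]
    simp only [a, b, omegaRatio, hmid, hpartner, hs, show n - k = k + 1 by omega]
    field_simp
    linear_combination 2 * chebF κ (X (k + 1)) * s k * (h₂ - h₁)
  rw [htop, sum_range_mul_telescope a b s _ _ k hg₀ (fun q hq ↦ hg q hq.le) hrec]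

lemma theta2_of_omegaOdd_nonpos (hκ : 1 ≤ κ) (hn : n = 2 * k + 1) {l : ℕ} {E : ℝ}
    (hX : ∀ p ≤ n, IsAdmissible κ (X p)) (hP : ∀ q ≤ k + 1, X q * X (n + 1 - q) = E)
    (hT : ∀ q ≤ k, chebT κ (X q) = chebT κ (X (n - q)))
    (hlast : X (n + 1) = cos (l * π / κ)) (hω : ∀ q ≤ k, omegaOdd κ n X q ≤ 0) :
    Theta2 (k + 1) κ E := by
  refine ⟨X, omegaOdd κ n X, fun q hq ↦ ⟨(hX q (by omega)).1, (hX q (by omega)).2.1.le, ?_⟩,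
    fun q hq ↦ hω q (by omega), fun j hj ↦ g_eq_sum_omegaOdd hκ hn hj hX hP hT hlast⟩
  rw [← hP q hq, mul_div_cancel_left₀ _ (hX q (by omega)).1]
  rcases Nat.eq_zero_or_pos q with rfl | hq₀
  · rw [Nat.sub_zero, hlast]
    exact abs_cos_le_one _
  · exact (hX _ (by omega)).2.1.le

end omegaOdd

theorem omega_negative_odd_general (κ n : ℕ) (hκ : 4 ≤ κ)
    (hno : Odd n) (E : ℝ) (X : ℕ → ℝ)
    (hT : ∀ q ≤ (n - 1) / 2, chebT κ (X q) = chebT κ (X (n - q)))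
    (hP : ∀ q ≤ (n + 1) / 2, X q * X (n + 1 - q) = E)
    (hX : ∀ q ≤ (n - 1) / 2, (-1 < X q ∧ X q < 1 ∧ X q ≠ 0) ∧ chebU (κ - 1) (X q) ≠ 0)
    (hlast : (∃ l : ℕ, l ≤ κ ∧ X (n + 1) = Real.cos (l * π / κ)) ∧ X (n + 1) ≠ 0)
    (I₁ I₂ : Finset ℕ)
    (hunion : I₁ ∪ I₂ = Finset.range ((n + 1) / 2))
    (h₁ : ∀ q ∈ I₁, 0 < X q * X (n - q) ∧
      chebU (κ - 1) (X q) * chebU (κ - 1) (X (n - q)) < 0)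
    (h₂ : ∀ q ∈ I₂, X q * X (n - q) < 0 ∧
      0 < chebU (κ - 1) (X q) * chebU (κ - 1) (X (n - q))) :
    (∀ q < (n + 1) / 2, omegaOdd κ n X q < 0) ∧ Theta2 ((n + 1) / 2) κ E := by
  obtain ⟨k, hk⟩ := hno
  have hκ₁ : 1 ≤ κ := by omega
  rw [show (n - 1) / 2 = k by omega] at hT hX
  rw [show (n + 1) / 2 = k + 1 by omega] at hP hunion ⊢
  have hsign : ∀ q ≤ k,
      X q * X (n - q) * (chebU (κ - 1) (X q) * chebU (κ - 1) (X (n - q))) < 0 := by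
    intro q hq
    rcases Finset.mem_union.mp (hunion ▸ Finset.mem_range.mpr (by omega) : q ∈ I₁ ∪ I₂)
      with hq₁ | hq₂
    · exact mul_neg_of_pos_of_neg (h₁ q hq₁).1 (h₁ q hq₁).2
    · exact mul_neg_of_neg_of_pos (h₂ q hq₂).1 (h₂ q hq₂).2
  have hlow : ∀ q ≤ k, IsAdmissible κ (X q) := fun q hq ↦
    ⟨(hX q hq).1.2.2, abs_lt.mpr ⟨(hX q hq).1.1, (hX q hq).1.2.1⟩, (hX q hq).2⟩
  have hall : ∀ p ≤ n, IsAdmissible κ (X p) := by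
    intro p hp
    rcases le_or_gt p k with hpk | hpk
    · exact hlow p hpk
    · have hq : n - p ≤ k := by omega
      simpa [Nat.sub_sub_self hp] using (hlow _ hq).of_chebT_eq hκ₁ (hT _ hq) (hsign _ hq)
  have hneg : ∀ q ≤ k, omegaOdd κ n X q < 0 := fun q ↦ omegaOdd_neg hk fun p hp ↦
    omegaRatio_neg (hall p (by omega)).one_sub_sq_pos (hall (n - p) (by omega)).one_sub_sq_pos
      (hsign p hp)
  obtain ⟨⟨l, -, hl⟩, -⟩ := hlast
  exact ⟨fun q hq ↦ hneg q (by omega),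
    theta2_of_omegaOdd_nonpos hκ₁ hk hall hP hT hl fun q hq ↦ (hneg q hq).le⟩

/-- Under the "mix and match" assumption the coefficients `ω_q` are all strictly
negative, so that `E ∈ 𝚯_{(n+1)/2,κ}` (dimension 2). -/
theorem omega_negative_odd (κ n : ℕ) (hκ : 4 ≤ κ) (hke : Even κ)
    (hn : 1 ≤ n) (hno : Odd n) (E : ℝ) (hE : 0 < E) (X : ℕ → ℝ)
    (hT : ∀ q ≤ (n - 1) / 2, chebT κ (X q) = chebT κ (X (n - q)))
    (hP : ∀ q ≤ (n + 1) / 2, X q * X (n + 1 - q) = E)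
    (hX : ∀ q ≤ (n - 1) / 2, (-1 < X q ∧ X q < 1 ∧ X q ≠ 0) ∧ chebU (κ - 1) (X q) ≠ 0)
    (hlast : (∃ l : ℕ, l ≤ κ ∧ X (n + 1) = Real.cos (l * π / κ)) ∧ X (n + 1) ≠ 0)
    (I₁ I₂ : Finset ℕ) (hdisj : Disjoint I₁ I₂)
    (hunion : I₁ ∪ I₂ = Finset.range ((n + 1) / 2))
    (h₁ : ∀ q ∈ I₁, 0 < X q * X (n - q) ∧
      chebU (κ - 1) (X q) * chebU (κ - 1) (X (n - q)) < 0)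
    (h₂ : ∀ q ∈ I₂, X q * X (n - q) < 0 ∧
      0 < chebU (κ - 1) (X q) * chebU (κ - 1) (X (n - q))) :
    (∀ q < (n + 1) / 2, omegaOdd κ n X q < 0) ∧ Theta2 ((n + 1) / 2) κ E :=
  omega_negative_odd_general κ n hκ hno E X hT hP hX hlast I₁ I₂ hunion h₁ h₂
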